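/- arXiv:1802.05175 — 3 statements merged into one kernel-verified Lean document; each statement's English description precedes it below -/
import Mathlib

section
/- Let N ≥ 1 and let S be a symmetric N×N real matrix with nonnegative entries. Suppose (ρ_x)_{x=1}^N are compactly supported symmetric Borel probability measures on ℝ whose Stieltjes transforms m_x(z) = ∫ (τ − z)⁻¹ ρ_x(dτ) satisfy −1/m_x(z) = z + ∑_{y=1}^N S_{xy} m_y(z) for every x and every z in the complex upper half-plane, and let ρ := N⁻¹ ∑_{x=1}^N ρ_x. Then sSup(supp ρ) ≤ 2‖S‖^{1/2}. -/
open MeasureTheory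

/-- The topological support of a measure on `ℝ`: the set of points all of whose
neighbourhoods have positive measure. -/
def measSupport (μ : Measure ℝ) : Set ℝ :=
  {x : ℝ | ∀ U ∈ nhds x, μ U ≠ 0}

/-- The matrix norm induced by the maximum norm on `ℝ^N`: the maximum absolute row sum. -/
noncomputable def maxRowNorm {N : ℕ} (M : Matrix (Fin N) (Fin N) ℝ) : ℝ :=
  ⨆ x, ∑ y, |M x y|

/-!
Fix `E₀ > 2 ‖S‖^{1/2}` and write `m(z)` for the vector of Stieltjes transforms. For `Re z ≥ E₀`
the QVE gives `E₀ ‖m‖ ≤ ‖S‖ ‖m‖² + 1`, which excludes the value `‖m‖ = 2 / E₀`. Along a vertical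
line `‖m(E + iη)‖ ≤ η⁻¹` is small for large `η` and continuous in `η`, so `‖m‖ < 2 / E₀` for every
`η > 0`. Taking imaginary parts of the QVE then yields `Im m_x(E + iη) ≤ C η`, hence
`ρ_x [E - η, E + η] ≤ 2 C η²` for all `E ≥ E₀`, and a measure giving mass `O(η²)` to all
intervals of length `η` in a half-line vanishes there.
-/

open Set Filter Topology

lemma lt_of_continuousOn_Icc_of_forall_ne {α δ : Type*} [ConditionallyCompleteLinearOrder α]
    [TopologicalSpace α] [OrderTopology α] [DenselyOrdered α] [LinearOrder δ]
    [TopologicalSpace δ] [OrderClosedTopology δ] {f : α → δ} {a b : α} {c : δ} (hab : a ≤ b)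
    (hf : ContinuousOn f (Icc a b)) (hc : ∀ t ∈ Icc a b, f t ≠ c) (hb : f b < c) : f a < c := by
  by_contra! ha
  obtain ⟨t, ht, hft⟩ := intermediate_value_Icc' hab hf ⟨hb.le, ha⟩
  exact hc t ht hft

lemma measure_Ioc_eq_zero_of_measureReal_Ioc_le_sq {μ : Measure ℝ} [IsFiniteMeasure μ]
    {a b C : ℝ} (h : ∀ x y, a ≤ x → x < y → y ≤ b → μ.real (Ioc x y) ≤ C * (y - x) ^ 2) :
    μ (Ioc a b) = 0 := by
  rcases le_or_gt b a with hba | hab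
  · simp [Ioc_eq_empty_of_le hba]
  set F : ℝ → ℝ := fun t => μ.real (Iic t)
  have hF : ∀ x y, x ≤ y → μ.real (Ioc x y) = F y - F x := fun x y hxy => by
    rw [← Iic_sdiff_Iic, measureReal_sdiff (Iic_subset_Iic.2 hxy) measurableSet_Iic]
  -- Telescoping over `n` equal pieces: the increments of `F` are `O(n⁻²)`, their sum `O(n⁻¹)`.
  have hpart : ∀ n : ℕ, 1 ≤ n → μ.real (Ioc a b) ≤ C * (b - a) ^ 2 / n := by
    intro n hn
    have hn' : (0 : ℝ) < n := by exact_mod_cast hn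
    set δ := (b - a) / n
    have hδ : 0 < δ := div_pos (sub_pos.2 hab) hn'
    set t : ℕ → ℝ := fun j => a + j * δ
    have ht : ∀ j, t (j + 1) = t j + δ := fun j => by simp only [t]; push_cast; ring
    have htn : t n = b := by simp only [t, δ]; field_simp; ring
    have hta : ∀ j, a ≤ t j := fun j => le_add_of_nonneg_right (by positivity)
    have htb : ∀ j ≤ n, t j ≤ b := fun j hj => htn ▸ by simp only [t]; gcongr
    calc μ.real (Ioc a b) = F (t n) - F (t 0) := by simp [htn, t, hF a b hab.le]
      _ = ∑ j ∈ Finset.range n, (F (t (j + 1)) - F (t j)) :=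
          (Finset.sum_range_sub (fun j => F (t j)) n).symm
      _ ≤ ∑ j ∈ Finset.range n, C * δ ^ 2 := by
          refine Finset.sum_le_sum fun j hj => ?_
          have hlt : t j < t (j + 1) := by linarith [ht j]
          rw [← hF _ _ hlt.le]
          simpa [ht j] using h _ _ (hta j) hlt (htb _ (Finset.mem_range.1 hj))
      _ = C * (b - a) ^ 2 / n := by
          rw [Finset.sum_const, Finset.card_range, nsmul_eq_mul]; simp only [δ]; field_simp
  have hle : μ.real (Ioc a b) ≤ 0 := ge_of_tendsto (tendsto_const_div_atTop_nhds_zero_nat _)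
    (eventually_atTop.2 ⟨1, hpart⟩)
  exact (measureReal_eq_zero_iff).1 (le_antisymm hle measureReal_nonneg)

lemma measure_Ioi_eq_zero_of_measureReal_Ioc_le_sq {μ : Measure ℝ} [IsFiniteMeasure μ]
    {a C : ℝ} (h : ∀ x y, a ≤ x → x < y → μ.real (Ioc x y) ≤ C * (y - x) ^ 2) :
    μ (Ioi a) = 0 := by
  refine measure_mono_null (fun t (ht : a < t) => mem_iUnion.2 ?_)
    (measure_iUnion_null fun n : ℕ => measure_Ioc_eq_zero_of_measureReal_Ioc_le_sq
      (b := a + n) fun x y hx hxy _ => h x y hx hxy)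
  obtain ⟨n, hn⟩ := exists_nat_gt (t - a)
  exact ⟨n, ht, by linarith⟩

lemma le_of_mem_measSupport {μ : Measure ℝ} {a E : ℝ} (hE : E ∈ measSupport μ)
    (ha : μ (Ioi a) = 0) : E ≤ a :=
  not_lt.1 fun haE => hE _ (Ioi_mem_nhds haE) ha

lemma sum_le_maxRowNorm {N : ℕ} {S : Matrix (Fin N) (Fin N) ℝ}
    (hS : ∀ x y, 0 ≤ S x y) (x : Fin N) : ∑ y, S x y ≤ maxRowNorm S :=
  (Finset.sum_congr rfl fun y _ => (abs_of_nonneg (hS x y)).symm).trans_le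
    (le_ciSup (f := fun x => ∑ y, |S x y|) (Finite.bddAbove (finite_range _)) x)

lemma maxRowNorm_nonneg {N : ℕ} (S : Matrix (Fin N) (Fin N) ℝ) : 0 ≤ maxRowNorm S :=
  Real.iSup_nonneg fun _ => Finset.sum_nonneg fun _ _ => abs_nonneg _

noncomputable def stieltjes (μ : Measure ℝ) (z : ℂ) : ℂ :=
  ∫ τ, ((τ : ℂ) - z)⁻¹ ∂μ

section Stieltjes

variable {μ : Measure ℝ} {z : ℂ}

lemma ofReal_sub_ne_zero_of_im_pos (hz : 0 < z.im) (τ : ℝ) : (τ : ℂ) - z ≠ 0 :=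
  fun h => hz.ne' (by simpa using congrArg Complex.im h)

lemma norm_inv_ofReal_sub_le (hz : 0 < z.im) (τ : ℝ) : ‖((τ : ℂ) - z)⁻¹‖ ≤ z.im⁻¹ := by
  rw [norm_inv]
  refine inv_anti₀ hz ?_
  simpa [abs_of_pos hz] using Complex.abs_im_le_norm ((τ : ℂ) - z)

lemma im_inv_ofReal_sub (z : ℂ) (τ : ℝ) :
    (((τ : ℂ) - z)⁻¹).im = z.im / ((τ - z.re) ^ 2 + z.im ^ 2) := by
  simp only [Complex.inv_im, Complex.normSq_apply, Complex.sub_im, Complex.sub_re,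
    Complex.ofReal_im, Complex.ofReal_re, zero_sub, neg_neg]
  ring

lemma integrable_inv_ofReal_sub [IsFiniteMeasure μ] (hz : 0 < z.im) :
    Integrable (fun τ : ℝ => ((τ : ℂ) - z)⁻¹) μ :=
  (integrable_const z.im⁻¹).mono'
    (by fun_prop : Measurable fun τ : ℝ => ((τ : ℂ) - z)⁻¹).aestronglyMeasurable
    (Eventually.of_forall (norm_inv_ofReal_sub_le hz))

lemma norm_stieltjes_le [IsProbabilityMeasure μ] (hz : 0 < z.im) :
    ‖stieltjes μ z‖ ≤ z.im⁻¹ := by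
  simpa [stieltjes] using norm_integral_le_of_norm_le_const (μ := μ)
    (Eventually.of_forall (norm_inv_ofReal_sub_le hz))

lemma im_stieltjes [IsFiniteMeasure μ] (hz : 0 < z.im) :
    (stieltjes μ z).im = ∫ τ, z.im / ((τ - z.re) ^ 2 + z.im ^ 2) ∂μ := by
  simp_rw [stieltjes, ← im_inv_ofReal_sub]
  exact (integral_im (integrable_inv_ofReal_sub hz)).symm

lemma im_stieltjes_nonneg [IsFiniteMeasure μ] (hz : 0 < z.im) : 0 ≤ (stieltjes μ z).im := by
  rw [im_stieltjes hz]
  exact integral_nonneg fun τ => by positivity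

lemma measureReal_Icc_le_im_stieltjes [IsFiniteMeasure μ] (E : ℝ) {η : ℝ} (hη : 0 < η) :
    μ.real (Icc (E - η) (E + η)) ≤ 2 * η * (stieltjes μ (E + η * Complex.I)).im := by
  have hz : 0 < (E + η * Complex.I : ℂ).im := by simpa using hη
  have hre : (E + η * Complex.I : ℂ).re = E := by simp
  have him : (E + η * Complex.I : ℂ).im = η := by simp
  have hint : Integrable (fun τ : ℝ => η / ((τ - E) ^ 2 + η ^ 2)) μ := by
    simpa only [RCLike.im_to_complex, im_inv_ofReal_sub, hre, him] using
      (integrable_inv_ofReal_sub (μ := μ) hz).im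
  rw [im_stieltjes hz, hre, him]
  calc μ.real (Icc (E - η) (E + η))
      = 2 * η * ∫ τ, (Icc (E - η) (E + η)).indicator (fun _ => (2 * η)⁻¹) τ ∂μ := by
        rw [integral_indicator_const _ measurableSet_Icc, smul_eq_mul]
        field_simp
    _ ≤ 2 * η * ∫ τ, η / ((τ - E) ^ 2 + η ^ 2) ∂μ := by
        refine mul_le_mul_of_nonneg_left (integral_mono_of_nonneg
          (ae_of_all _ fun τ => ?_) hint (ae_of_all _ fun τ => ?_)) (by positivity)
        · exact indicator_nonneg (fun _ _ => by positivity) τ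
        · by_cases hτ : τ ∈ Icc (E - η) (E + η)
          · have hsq : (τ - E) ^ 2 ≤ η ^ 2 := by nlinarith [hτ.1, hτ.2]
            rw [indicator_of_mem hτ, inv_eq_one_div,
              div_le_div_iff₀ (by positivity) (by positivity)]
            nlinarith
          · rw [indicator_of_notMem hτ]
            positivity

lemma continuousOn_stieltjes [IsFiniteMeasure μ] : ContinuousOn (stieltjes μ) {z | 0 < z.im} := by
  intro z (hz : 0 < z.im)
  have hz' : ∀ᶠ w in 𝓝 z, z.im / 2 < w.im :=
    (Complex.continuous_im.tendsto z).eventually (lt_mem_nhds (half_lt_self hz))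
  refine (continuousAt_of_dominated (bound := fun _ => (z.im / 2)⁻¹)
    (Eventually.of_forall fun w => (by fun_prop : Measurable _).aestronglyMeasurable) ?_
    (integrable_const _) (ae_of_all _ fun τ => ?_)).continuousWithinAt
  · filter_upwards [hz'] with w hw
    exact ae_of_all _ fun τ => (norm_inv_ofReal_sub_le (by linarith) τ).trans
      (inv_anti₀ (by linarith) hw.le)
  · exact (continuousAt_const.sub continuousAt_id).inv₀ (ofReal_sub_ne_zero_of_im_pos hz τ)

end Stieltjes

def SolvesQVE {ι : Type*} [Fintype ι] (S : Matrix ι ι ℝ) (z : ℂ) (m : ι → ℂ) : Prop :=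
  ∀ x, -(m x)⁻¹ = z + ∑ y, (S x y : ℂ) * m y

section QVE

variable {ι : Type*} [Fintype ι] {S : Matrix ι ι ℝ} {s : ℝ} {z : ℂ} {m : ι → ℂ}

lemma im_sum_ofReal_mul (S : Matrix ι ι ℝ) (m : ι → ℂ) (x : ι) :
    (∑ y, (S x y : ℂ) * m y).im = ∑ y, S x y * (m y).im := by
  simp [Complex.im_sum]

lemma norm_sum_ofReal_mul_le (hS : ∀ x y, 0 ≤ S x y) (hrow : ∀ x, ∑ y, S x y ≤ s) (x : ι) :
    ‖∑ y, (S x y : ℂ) * m y‖ ≤ s * ‖m‖ :=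
  calc ‖∑ y, (S x y : ℂ) * m y‖ ≤ ∑ y, S x y * ‖m‖ := by
        refine (norm_sum_le _ _).trans (Finset.sum_le_sum fun y _ => ?_)
        rw [norm_mul, Complex.norm_real, Real.norm_of_nonneg (hS x y)]
        exact mul_le_mul_of_nonneg_left (norm_le_pi_norm m y) (hS x y)
    _ ≤ s * ‖m‖ := by
        rw [← Finset.sum_mul]; exact mul_le_mul_of_nonneg_right (hrow x) (norm_nonneg m)

namespace SolvesQVE

lemma ne_zero (hQ : SolvesQVE S z m) (hS : ∀ x y, 0 ≤ S x y) (him : ∀ x, 0 ≤ (m x).im)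
    (hz : 0 < z.im) (x : ι) : m x ≠ 0 := by
  intro h0
  have h := congrArg Complex.im (hQ x)
  rw [h0, inv_zero, neg_zero, Complex.zero_im, Complex.add_im, im_sum_ofReal_mul] at h
  linarith [Finset.sum_nonneg fun y (_ : y ∈ Finset.univ) => mul_nonneg (hS x y) (him y)]

lemma re_mul_norm_le (hQ : SolvesQVE S z m) (hS : ∀ x y, 0 ≤ S x y)
    (hrow : ∀ x, ∑ y, S x y ≤ s) (him : ∀ x, 0 ≤ (m x).im) (hz : 0 < z.im) :
    z.re * ‖m‖ ≤ s * ‖m‖ ^ 2 + 1 := by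
  rcases le_or_gt (z.re - s * ‖m‖) 0 with hle | hpos
  · nlinarith [norm_nonneg m]
  suffices ‖m‖ ≤ (z.re - s * ‖m‖)⁻¹ by
    have := mul_le_mul_of_nonneg_right this hpos.le
    rw [inv_mul_cancel₀ hpos.ne'] at this
    nlinarith
  refine (pi_norm_le_iff_of_nonneg (by positivity)).2 fun x => ?_
  have hmx : 0 < ‖m x‖ := norm_pos_iff.2 (hQ.ne_zero hS him hz x)
  have hinv : ‖m x‖⁻¹ = ‖z + ∑ y, (S x y : ℂ) * m y‖ := by rw [← hQ x, norm_neg, norm_inv]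
  have hlow : z.re - s * ‖m‖ ≤ ‖z + ∑ y, (S x y : ℂ) * m y‖ := by
    have := norm_sum_ofReal_mul_le (m := m) hS hrow x
    have := Complex.re_le_norm z
    have := norm_sub_norm_le z (-∑ y, (S x y : ℂ) * m y)
    rw [norm_neg, sub_neg_eq_add] at this
    linarith
  rwa [le_inv_comm₀ hmx hpos, hinv]

lemma im_eq (hQ : SolvesQVE S z m) (x : ι) :
    (m x).im = ‖m x‖ ^ 2 * (z.im + ∑ y, S x y * (m y).im) := by
  rcases eq_or_ne (m x) 0 with h0 | h0
  · simp [h0]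
  have h := congrArg Complex.im (hQ x)
  rw [Complex.neg_im, Complex.inv_im, Complex.add_im, im_sum_ofReal_mul, neg_div, neg_neg,
    ← Complex.sq_norm] at h
  rw [← h]
  field_simp

lemma im_le (hQ : SolvesQVE S z m) (hS : ∀ x y, 0 ≤ S x y)
    (hrow : ∀ x, ∑ y, S x y ≤ s) (him : ∀ x, 0 ≤ (m x).im) (hz : 0 ≤ z.im) {c : ℝ}
    (hm : ‖m‖ ≤ c) (hc : s * c ^ 2 < 1) (x : ι) :
    (m x).im ≤ c ^ 2 * z.im / (1 - s * c ^ 2) := by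
  set V := ‖fun y => (m y).im‖
  have hV : 0 ≤ V := norm_nonneg _
  have hmV : ∀ y, (m y).im ≤ V := fun y =>
    (le_abs_self _).trans (norm_le_pi_norm (fun y => (m y).im) y)
  have hrec : ∀ y, (m y).im ≤ c ^ 2 * (z.im + s * V) := by
    intro y
    have hsum : ∑ y', S y y' * (m y').im ≤ s * V :=
      (Finset.sum_le_sum fun y' _ => mul_le_mul_of_nonneg_left (hmV y') (hS y y')).trans
        (by rw [← Finset.sum_mul]; exact mul_le_mul_of_nonneg_right (hrow y) hV)
    have hmy : ‖m y‖ ^ 2 ≤ c ^ 2 :=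
      pow_le_pow_left₀ (norm_nonneg _) ((norm_le_pi_norm m y).trans hm) 2
    rw [hQ.im_eq y]
    refine mul_le_mul hmy (by linarith) ?_ (sq_nonneg c)
    linarith [Finset.sum_nonneg fun y' (_ : y' ∈ Finset.univ) => mul_nonneg (hS y y') (him y')]
  have : Nonempty ι := ⟨x⟩
  have hVle : V ≤ c ^ 2 * (z.im + s * V) :=
    (pi_norm_le_iff_of_nonempty _).2 fun y => by
      rw [Real.norm_of_nonneg (him y)]; exact hrec y
  rw [le_div_iff₀ (by linarith)]
  nlinarith [hmV x, him x]

end SolvesQVE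

end QVE

section StieltjesQVE

variable {ι : Type*} [Fintype ι] {S : Matrix ι ι ℝ} {s : ℝ} {ρ : ι → Measure ℝ}
  [∀ x, IsProbabilityMeasure (ρ x)]

lemma norm_stieltjes_lt_of_solvesQVE (hS : ∀ x y, 0 ≤ S x y) (hrow : ∀ x, ∑ y, S x y ≤ s)
    (hQ : ∀ z : ℂ, 0 < z.im → SolvesQVE S z fun x => stieltjes (ρ x) z)
    {E₀ E η : ℝ} (hE₀ : 0 < E₀) (hs : 4 * s < E₀ ^ 2) (hE : E₀ ≤ E) (hη : 0 < η) :
    ‖fun x => stieltjes (ρ x) (E + η * Complex.I)‖ < 2 / E₀ := by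
  set f : ℝ → ℝ := fun t => ‖fun x => stieltjes (ρ x) (E + t * Complex.I)‖
  have him : ∀ t : ℝ, (E + t * Complex.I : ℂ).im = t := fun t => by simp
  have hre : ∀ t : ℝ, (E + t * Complex.I : ℂ).re = E := fun t => by simp
  refine lt_of_continuousOn_Icc_of_forall_ne (f := f) (le_max_left η E₀) ?_ ?_ ?_
  · refine continuous_norm.comp_continuousOn (continuousOn_pi.2 fun x => ?_)
    refine continuousOn_stieltjes.comp (by fun_prop) fun t ht => ?_
    simpa [him] using hη.trans_le ht.1
  · intro t ht hft
    have hz : 0 < (E + t * Complex.I : ℂ).im := by rw [him]; linarith [ht.1]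
    have hq := (hQ _ hz).re_mul_norm_le hS hrow (fun x => im_stieltjes_nonneg hz) hz
    rw [hre] at hq
    change E * f t ≤ s * f t ^ 2 + 1 at hq
    rw [hft] at hq
    have : E * (2 / E₀) ≥ 2 := by rw [ge_iff_le, mul_div_assoc', le_div_iff₀ hE₀]; linarith
    have : s * (2 / E₀) ^ 2 < 1 := by
      rw [div_pow, mul_div_assoc', div_lt_one (by positivity)]; linarith
    linarith
  · have hT : 0 < max η E₀ := hη.trans_le (le_max_left η E₀)
    calc f (max η E₀) ≤ (max η E₀)⁻¹ := (pi_norm_le_iff_of_nonneg (by positivity)).2 fun x => by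
          simpa [him] using norm_stieltjes_le (μ := ρ x) (z := E + max η E₀ * Complex.I)
            (by rw [him]; exact hT)
      _ ≤ E₀⁻¹ := inv_anti₀ hE₀ (le_max_right η E₀)
      _ < 2 / E₀ := by rw [inv_eq_one_div]; gcongr; norm_num

lemma im_stieltjes_le_of_solvesQVE (hS : ∀ x y, 0 ≤ S x y) (hrow : ∀ x, ∑ y, S x y ≤ s)
    (hQ : ∀ z : ℂ, 0 < z.im → SolvesQVE S z fun x => stieltjes (ρ x) z)
    {E₀ E η : ℝ} (hE₀ : 0 < E₀) (hs : 4 * s < E₀ ^ 2) (hE : E₀ ≤ E) (hη : 0 < η) (x : ι) :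
    (stieltjes (ρ x) (E + η * Complex.I)).im ≤ 4 * η / (E₀ ^ 2 - 4 * s) := by
  have hz : 0 < (E + η * Complex.I : ℂ).im := by simpa using hη
  have hc : s * (2 / E₀) ^ 2 < 1 := by
    rw [div_pow, mul_div_assoc', div_lt_one (by positivity)]; linarith
  have h := (hQ _ hz).im_le hS hrow (fun x => im_stieltjes_nonneg hz) hz.le
    (norm_stieltjes_lt_of_solvesQVE hS hrow hQ hE₀ hs hE hη).le hc x
  have hden : 1 - s * (2 / E₀) ^ 2 = (E₀ ^ 2 - 4 * s) / E₀ ^ 2 := by field_simp; ring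
  convert h using 1
  rw [hden, show (E + η * Complex.I : ℂ).im = η by simp]
  field_simp
  norm_num

lemma measure_Ioi_eq_zero_of_solvesQVE (hS : ∀ x y, 0 ≤ S x y) (hrow : ∀ x, ∑ y, S x y ≤ s)
    (hQ : ∀ z : ℂ, 0 < z.im → SolvesQVE S z fun x => stieltjes (ρ x) z)
    {E₀ : ℝ} (hE₀ : 0 < E₀) (hs : 4 * s < E₀ ^ 2) (x : ι) : ρ x (Ioi E₀) = 0 := by
  refine measure_Ioi_eq_zero_of_measureReal_Ioc_le_sq (C := 2 / (E₀ ^ 2 - 4 * s))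
    fun a b ha hab => ?_
  set r := (b - a) / 2
  have hr : 0 < r := by simp only [r]; linarith
  have hIcc : Icc ((a + b) / 2 - r) ((a + b) / 2 + r) = Icc a b := by
    simp only [r]; congr 1 <;> ring
  calc (ρ x).real (Ioc a b) ≤ (ρ x).real (Icc ((a + b) / 2 - r) ((a + b) / 2 + r)) :=
        hIcc ▸ measureReal_mono Ioc_subset_Icc_self
    _ ≤ 2 * r * (4 * r / (E₀ ^ 2 - 4 * s)) :=
        (measureReal_Icc_le_im_stieltjes _ hr).trans (mul_le_mul_of_nonneg_left
          (im_stieltjes_le_of_solvesQVE hS hrow hQ hE₀ hs (by linarith) hr x) (by positivity))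
    _ = 2 / (E₀ ^ 2 - 4 * s) * (b - a) ^ 2 := by simp only [r]; ring

end StieltjesQVE

theorem sSup_support_le_trivial_bound_general (N : ℕ)
    (S : Matrix (Fin N) (Fin N) ℝ) (hSnn : ∀ x y, 0 ≤ S x y)
    (ρ : Fin N → Measure ℝ) [∀ x, IsProbabilityMeasure (ρ x)]
    (m : Fin N → ℂ → ℂ)
    (hm : ∀ x (z : ℂ), m x z = ∫ τ, ((τ : ℂ) - z)⁻¹ ∂(ρ x))
    (hQVE : ∀ x (z : ℂ), 0 < z.im →
      -(m x z)⁻¹ = z + ∑ y, (S x y : ℂ) * m y z)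
    (ρtot : Measure ℝ) (hρtot : ρtot = (N : ENNReal)⁻¹ • ∑ x, ρ x) :
    sSup (measSupport ρtot) ≤ 2 * maxRowNorm S ^ ((1 : ℝ) / 2) := by
  set s := maxRowNorm S
  have hQ : ∀ z : ℂ, 0 < z.im → SolvesQVE S z fun x => stieltjes (ρ x) z := fun z hz x => by
    simpa only [stieltjes, ← hm] using hQVE x z hz
  have hnull : ∀ E₀, 2 * √s < E₀ → ρtot (Ioi E₀) = 0 := by
    intro E₀ hE₀
    have hpos : 0 < E₀ := lt_of_le_of_lt (by positivity) hE₀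
    have hs : 4 * s < E₀ ^ 2 := by
      nlinarith [Real.sq_sqrt (maxRowNorm_nonneg S), Real.sqrt_nonneg s]
    simp [hρtot, measure_Ioi_eq_zero_of_solvesQVE hSnn (sum_le_maxRowNorm hSnn) hQ hpos hs]
  rw [← Real.sqrt_eq_rpow]
  exact Real.sSup_le (fun E hE => le_of_forall_gt_imp_ge_of_dense fun E₀ hE₀ =>
    le_of_mem_measSupport hE (hnull E₀ hE₀)) (by positivity)

/-- The trivial bound: the self-consistent density of states of a Wigner-type model with
variance matrix `S` is supported in `[-2‖S‖^{1/2}, 2‖S‖^{1/2}]`. -/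
theorem sSup_support_le_trivial_bound (N : ℕ) (hN : 1 ≤ N)
    (S : Matrix (Fin N) (Fin N) ℝ) (hsymS : S.IsSymm) (hSnn : ∀ x y, 0 ≤ S x y)
    (ρ : Fin N → Measure ℝ) [∀ x, IsProbabilityMeasure (ρ x)]
    (hcomp : ∀ x, IsCompact (measSupport (ρ x)))
    (hsymm : ∀ x, (ρ x).map (fun τ => -τ) = ρ x)
    (m : Fin N → ℂ → ℂ)
    (hm : ∀ x (z : ℂ), m x z = ∫ τ, ((τ : ℂ) - z)⁻¹ ∂(ρ x))
    (hQVE : ∀ x (z : ℂ), 0 < z.im →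
      -(m x z)⁻¹ = z + ∑ y, (S x y : ℂ) * m y z)
    (ρtot : Measure ℝ) (hρtot : ρtot = (N : ENNReal)⁻¹ • ∑ x, ρ x) :
    sSup (measSupport ρtot) ≤ 2 * maxRowNorm S ^ ((1 : ℝ) / 2) :=
  sSup_support_le_trivial_bound_general N S hSnn ρ m hm hQVE ρtot hρtot
end

section
/- Let ρ be a compactly supported Borel probability measure on ℝ that is symmetric (invariant under τ ↦ −τ). Then the maximum of its support equals the limit superior of the k-th roots of its moments: sSup(supp ρ) = limsup_{k→∞} (∫ τ^k ρ(dτ))^{1/k}. -/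
/-!
The support is symmetric, so with `M = sup supp ρ` we have `|τ| ≤ M` almost everywhere and hence
`|(∫ τ^k)^(1/k)| ≤ M`. Conversely, for `0 ≤ b < M` the interval `(b, ∞)` is a neighbourhood of
`M ∈ supp ρ`, so it has mass `c > 0` and the even moments satisfy `∫ τ^(2j) ≥ b^(2j) c`; their
roots are at least `b c^(1/2j) → b`.
-/

open MeasureTheory

open Filter Topology Set

lemma measSupport_eq_support (μ : Measure ℝ) : measSupport μ = μ.support := by
  ext x
  simp only [measSupport, mem_ofPred_eq, Measure.mem_support_iff_forall, pos_iff_ne_zero]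

lemma Real.tendsto_rpow_inv_natCast_atTop {c : ℝ} (hc : 0 < c) :
    Tendsto (fun n : ℕ => c ^ (n : ℝ)⁻¹) atTop (𝓝 1) := by
  have h := (Real.continuousAt_const_rpow hc.ne').tendsto.comp
    (tendsto_inv_atTop_zero.comp tendsto_natCast_atTop_atTop)
  rwa [Real.rpow_zero] at h

section Symmetric

variable {G : Type*} [TopologicalSpace G] [MeasurableSpace G] [Neg G] [ContinuousNeg G]
  [MeasurableNeg G] {μ : Measure G}

lemma MeasureTheory.Measure.neg_mem_support_of_map_neg_eq (hμ : μ.map (fun x => -x) = μ) {x : G}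
    (hx : x ∈ μ.support) : -x ∈ μ.support := by
  rw [Measure.mem_support_iff_forall] at hx ⊢
  intro U hU
  calc 0 < μ ((fun y => -y) ⁻¹' U) := hx _ (continuous_neg.continuousAt.preimage_mem_nhds hU)
    _ ≤ μ.map (fun y => -y) U := Measure.le_map_apply measurable_neg.aemeasurable U
    _ = μ U := by rw [hμ]

end Symmetric

lemma MeasureTheory.Measure.ae_abs_le_sSup_support {μ : Measure ℝ} (hμ : μ.map (fun x => -x) = μ)
    (hbdd : BddAbove μ.support) : ∀ᵐ x ∂μ, |x| ≤ sSup μ.support := by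
  filter_upwards [Measure.support_mem_ae] with x hx
  exact abs_le.mpr ⟨neg_le.mp (le_csSup hbdd (Measure.neg_mem_support_of_map_neg_eq hμ hx)),
    le_csSup hbdd hx⟩

-- An odd moment may be negative, where `Real.rpow` gives a junk value; the bounds below only see
-- it through `|x ^ y| ≤ |x| ^ y` or avoid it by using even moments.
noncomputable def momentRoot (μ : Measure ℝ) (k : ℕ) : ℝ := (∫ τ, τ ^ k ∂μ) ^ (k : ℝ)⁻¹

section Moments

variable {μ : Measure ℝ} {M : ℝ}

lemma integrable_pow_of_ae_abs_le [IsFiniteMeasure μ] (h : ∀ᵐ τ ∂μ, |τ| ≤ M) (k : ℕ) :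
    Integrable (fun τ => τ ^ k) μ := by
  refine .of_bound (continuous_pow k).aestronglyMeasurable (M ^ k) ?_
  filter_upwards [h] with τ hτ
  rw [Real.norm_eq_abs, abs_pow]
  exact pow_le_pow_left₀ (abs_nonneg τ) hτ k

lemma abs_momentRoot_le [IsProbabilityMeasure μ] (h : ∀ᵐ τ ∂μ, |τ| ≤ M) {k : ℕ} (hk : k ≠ 0) :
    |momentRoot μ k| ≤ M := by
  have hM : 0 ≤ M := by
    obtain ⟨τ, hτ⟩ := h.exists
    exact (abs_nonneg τ).trans hτ
  have hmoment : |∫ τ, τ ^ k ∂μ| ≤ M ^ k := by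
    have := norm_integral_le_of_norm_le_const (μ := μ) (f := fun τ => τ ^ k) (C := M ^ k) (by
      filter_upwards [h] with τ hτ
      rw [Real.norm_eq_abs, abs_pow]
      exact pow_le_pow_left₀ (abs_nonneg τ) hτ k)
    simpa using this
  calc |momentRoot μ k| ≤ |∫ τ, τ ^ k ∂μ| ^ (k : ℝ)⁻¹ := Real.abs_rpow_le_abs_rpow _ _
    _ ≤ (M ^ k) ^ (k : ℝ)⁻¹ := by gcongr
    _ = M := Real.pow_rpow_inv_natCast hM hk

lemma momentRoot_nonneg_of_even {n : ℕ} (hn : Even n) : 0 ≤ momentRoot μ n :=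
  Real.rpow_nonneg (integral_nonneg fun τ => hn.pow_nonneg τ) _

variable [IsFiniteMeasure μ] {b : ℝ} {n : ℕ}

lemma pow_mul_measureReal_Ioi_le_integral_pow (hb : 0 ≤ b) (hn : Even n)
    (hint : Integrable (fun τ => τ ^ n) μ) : b ^ n * μ.real (Ioi b) ≤ ∫ τ, τ ^ n ∂μ :=
  calc b ^ n * μ.real (Ioi b) ≤ ∫ τ in Ioi b, τ ^ n ∂μ :=
        setIntegral_ge_of_const_le_real measurableSet_Ioi (measure_ne_top μ _)
          (fun _ hτ => pow_le_pow_left₀ hb (le_of_lt hτ) n) hint.integrableOn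
    _ ≤ ∫ τ, τ ^ n ∂μ := setIntegral_le_integral hint (.of_forall fun τ => hn.pow_nonneg τ)

lemma mul_measureReal_Ioi_rpow_le_momentRoot (hb : 0 ≤ b) (hn : Even n) (hn0 : n ≠ 0)
    (hint : Integrable (fun τ => τ ^ n) μ) :
    b * μ.real (Ioi b) ^ (n : ℝ)⁻¹ ≤ momentRoot μ n :=
  calc b * μ.real (Ioi b) ^ (n : ℝ)⁻¹ = (b ^ n * μ.real (Ioi b)) ^ (n : ℝ)⁻¹ := by
        rw [Real.mul_rpow (by positivity) measureReal_nonneg, Real.pow_rpow_inv_natCast hb hn0]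
    _ ≤ momentRoot μ n := Real.rpow_le_rpow (by positivity)
        (pow_mul_measureReal_Ioi_le_integral_pow hb hn hint) (by positivity)

lemma frequently_le_momentRoot (hM : M ∈ μ.support) (hb : b < M)
    (hint : ∀ k, Integrable (fun τ => τ ^ k) μ) : ∃ᶠ k in atTop, b ≤ momentRoot μ k := by
  have htwo : Tendsto (fun j : ℕ => 2 * j) atTop atTop :=
    tendsto_id.const_mul_atTop' two_pos
  refine htwo.frequently (Eventually.frequently ?_)
  rcases lt_or_ge b 0 with hb0 | hb0
  · exact .of_forall fun j => hb0.le.trans (momentRoot_nonneg_of_even (even_two_mul j))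
  obtain ⟨b', hbb', hb'M⟩ := exists_between hb
  have hc : 0 < μ.real (Ioi b') :=
    ENNReal.toReal_pos ((Measure.mem_support_iff_forall M).mp hM _ (Ioi_mem_nhds hb'M)).ne'
      (measure_ne_top μ _)
  have hlower :
      Tendsto (fun j : ℕ => b' * μ.real (Ioi b') ^ ((2 * j : ℕ) : ℝ)⁻¹) atTop (𝓝 b') := by
    simpa using ((Real.tendsto_rpow_inv_natCast_atTop hc).comp htwo).const_mul b'
  filter_upwards [hlower.eventually_const_le hbb', eventually_ge_atTop 1] with j hj hj1
  exact hj.trans (mul_measureReal_Ioi_rpow_le_momentRoot (hb0.trans hbb'.le) (even_two_mul j)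
    (by omega) (hint _))

end Moments

/-- For a compactly supported symmetric probability measure on `ℝ`, the maximum of the
support equals the limsup of the `k`-th roots of the moments. -/
theorem sSup_support_eq_limsup_moment_roots (ρ : Measure ℝ) [IsProbabilityMeasure ρ]
    (hcomp : IsCompact (measSupport ρ))
    (hsymm : ρ.map (fun τ => -τ) = ρ) :
    sSup (measSupport ρ) =
      Filter.limsup (fun k : ℕ => (∫ τ, τ ^ k ∂ρ) ^ ((k : ℝ)⁻¹)) Filter.atTop := by
  change _ = limsup (momentRoot ρ) atTop
  rw [measSupport_eq_support] at hcomp ⊢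
  have hM : sSup ρ.support ∈ ρ.support :=
    hcomp.sSup_mem (Measure.nonempty_support (IsProbabilityMeasure.ne_zero ρ))
  have habs := Measure.ae_abs_le_sSup_support hsymm hcomp.bddAbove
  have hbound : ∀ᶠ k in atTop, |momentRoot ρ k| ≤ sSup ρ.support :=
    (eventually_ne_atTop 0).mono fun k hk => abs_momentRoot_le habs hk
  have hle := hbound.mono fun k hk => (abs_le.mp hk).2
  have hge := hbound.mono fun k hk => (abs_le.mp hk).1
  refine le_antisymm (le_of_forall_lt_imp_le_of_dense fun b hb => ?_)
    (limsup_le_of_le (isBoundedUnder_of_eventually_ge hge).isCoboundedUnder_le hle)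
  exact le_limsup_of_frequently_le
    (frequently_le_momentRoot hM hb (integrable_pow_of_ae_abs_le habs))
    (isBoundedUnder_of_eventually_le hle)
end

section
/- Let (z_j)_{j≥0} be reals with z_0 = 1, 0 < z_j ≤ 1 for all j ≥ 1, and z_{a+b+1} ≤ z_a·z_b for all integers a, b ≥ 0. Let n ≥ 1 and h ≥ 0 be integers. For ω ∈ {+1,−1}^n let h_i := h + ∑_{j=1}^i ω_j, Δω := ∑_{j=1}^n ω_j, and say ω is admissible if h_i ≥ 0 for all 0 ≤ i ≤ n. Then ∑_{ω admissible} ((h + 1 + Δω)/(h + 1)) · W_U(ω) ≤ ∑_{ω ∈ {+1,−1}^n} W_U(ω), where W_U(ω) := ∏_{j≥1} z_j^{U_j(ω)} and U_j(ω) is the number of maximal blocks of consecutive +1's in ω of length exactly j. -/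
/-- The `p`-th step (`+1` or `-1`) of the sign sequence `ω`, extended by `0` outside. -/
def stepB (n : ℕ) (ω : Fin n → Bool) (p : ℕ) : ℤ :=
  if hp : p < n then (if ω ⟨p, hp⟩ then 1 else -1) else 0

/-- Height after `i` steps of the walk started at height `h` with increments `ω`. -/
def hgtB (n : ℕ) (ω : Fin n → Bool) (h : ℤ) (i : ℕ) : ℤ :=
  h + ∑ j ∈ Finset.range i, stepB n ω j

/-- Number of maximal blocks of consecutive `+1`'s of length exactly `j` in `ω`. -/
def upBlocks (n : ℕ) (ω : Fin n → Bool) (j : ℕ) : ℕ :=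
  ((Finset.range n).filter fun i =>
    (∀ m < j, stepB n ω (i + m) = 1) ∧ stepB n ω (i + j) ≠ 1 ∧
      (i = 0 ∨ stepB n ω (i - 1) ≠ 1)).card

/-!
Record, while reading `ω` from left to right, the length `a` of the current run of up-steps:
a down-step closes that run and contributes `z a` (with `z 0 = 1` for an empty run), and the end
of the sequence closes the last run. This makes the block weight a transfer-matrix weight, so both
sides of the inequality satisfy first-step recursions: with `W n a` the total weight of all
sequences and `B n a h` the admissible weight counted with multiplicity `h + 1 + Δω`,
`W (n+1) a = W n (a+1) + z a * W n 0` and `B (n+1) a h = B n (a+1) (h+1) + z a * B n 0 (h-1)`.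
Submultiplicativity gives `W n (a+1) ≤ z a * W n 0`, and with it induction on `n` yields
`B n a h ≤ (h + 1) * W n a`.
-/

open Finset

def stepSign (b : Bool) : ℤ := if b then 1 else -1

section Steps

variable {n : ℕ} (b : Bool) (ω : Fin n → Bool)

lemma stepB_cons_zero : stepB (n + 1) (Fin.cons b ω) 0 = stepSign b := by
  simp [stepB, stepSign]

lemma stepB_cons_succ (p : ℕ) : stepB (n + 1) (Fin.cons b ω) (p + 1) = stepB n ω p := by
  by_cases hp : p < n
  · simp [stepB, hp, ← Fin.succ_mk]
  · simp [stepB, hp]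

lemma hgtB_cons_succ (h : ℤ) (i : ℕ) :
    hgtB (n + 1) (Fin.cons b ω) h (i + 1) = hgtB n ω (h + stepSign b) i := by
  simp only [hgtB, sum_range_succ', stepB_cons_zero, stepB_cons_succ]
  ring

lemma admissible_cons_iff (h : ℤ) :
    (∀ i ≤ n + 1, 0 ≤ hgtB (n + 1) (Fin.cons b ω) h i) ↔
      0 ≤ h ∧ ∀ i ≤ n, 0 ≤ hgtB n ω (h + stepSign b) i := by
  constructor
  · intro H
    exact ⟨by simpa [hgtB] using H 0 (by omega),
      fun i hi => by simpa [hgtB_cons_succ] using H (i + 1) (by omega)⟩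
  · rintro ⟨h0, H⟩ (_ | i) hi
    · simpa [hgtB] using h0
    · rw [hgtB_cons_succ]
      exact H i (by omega)

end Steps

lemma Fintype.sum_pi_fin_succ {α M : Type*} [Fintype α] [AddCommMonoid M] (n : ℕ)
    (F : (Fin (n + 1) → α) → M) :
    ∑ ω, F ω = ∑ a, ∑ ω : Fin n → α, F (Fin.cons a ω) := by
  rw [← (Fin.consEquiv fun _ => α).sum_comp, Fintype.sum_prod_type]
  rfl

abbrev IsUpBlock (s : ℕ → ℤ) (j i : ℕ) : Prop :=
  (∀ m < j, s (i + m) = 1) ∧ s (i + j) ≠ 1 ∧ (i = 0 ∨ s (i - 1) ≠ 1)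

def upBlocksOf (s : ℕ → ℤ) (N j : ℕ) : ℕ := #{i ∈ range N | IsUpBlock s j i}

section Blocks

variable {s : ℕ → ℤ} {a j : ℕ}

lemma isUpBlock_iff_of_le (hs : ∀ p < a, s p = 1) (ha : s a ≠ 1) {i : ℕ} (hi : i ≤ a) :
    IsUpBlock s j i ↔ i = 0 ∧ j = a := by
  constructor
  · rintro ⟨hrun, hend, hstart⟩
    obtain rfl : i = 0 := by
      by_contra hi0
      exact hstart.resolve_left hi0 (hs _ (by omega))
    refine ⟨rfl, le_antisymm ?_ ?_⟩
    · by_contra! hlt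
      exact ha (by simpa using hrun a hlt)
    · by_contra! hlt
      exact hend (by simpa using hs j hlt)
  · rintro ⟨rfl, rfl⟩
    exact ⟨fun m hm => by simpa using hs m hm, by simpa using ha, Or.inl rfl⟩

lemma isUpBlock_add_iff (ha : s a ≠ 1) (i : ℕ) :
    IsUpBlock s j (a + 1 + i) ↔ IsUpBlock (fun p => s (a + 1 + p)) j i := by
  rcases i with _ | i
  · simp [IsUpBlock, ha, add_assoc]
  · simp [IsUpBlock, ← add_assoc]

lemma upBlocksOf_add (hs : ∀ p < a, s p = 1) (ha : s a ≠ 1) (m : ℕ) :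
    upBlocksOf s (a + 1 + m) j =
      (if j = a then 1 else 0) + upBlocksOf (fun p => s (a + 1 + p)) m j := by
  rw [upBlocksOf, upBlocksOf, card_filter, card_filter, sum_range_add]
  simp only [isUpBlock_add_iff ha]
  congr 1
  rw [sum_congr rfl fun i hi =>
    if_congr (isUpBlock_iff_of_le hs ha (Nat.lt_succ_iff.mp (mem_range.mp hi))) rfl rfl]
  simp [ite_and]

lemma upBlocksOf_succ_of_ne_one {N : ℕ} (hN : s N ≠ 1) (hj : 1 ≤ j) :
    upBlocksOf s (N + 1) j = upBlocksOf s N j := by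
  rw [upBlocksOf, range_add_one, filter_insert, if_neg]
  · rfl
  · rintro ⟨hrun, -⟩
    exact hN (by simpa using hrun 0 hj)

end Blocks

section Weights

variable (z : ℕ → ℝ)

/-- The block weight of `ω` preceded by a run of `a` up-steps. -/
def runWeight : (n : ℕ) → ℕ → (Fin n → Bool) → ℝ
  | 0, a, _ => z a
  | n + 1, a, ω =>
    if ω 0 then runWeight n (a + 1) (Fin.tail ω) else z a * runWeight n 0 (Fin.tail ω)

variable {z}

@[simp]
lemma runWeight_cons_true {n a : ℕ} (ω : Fin n → Bool) :
    runWeight z (n + 1) a (Fin.cons true ω) = runWeight z n (a + 1) ω := by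
  simp [runWeight]

@[simp]
lemma runWeight_cons_false {n a : ℕ} (ω : Fin n → Bool) :
    runWeight z (n + 1) a (Fin.cons false ω) = z a * runWeight z n 0 ω := by
  simp [runWeight]

lemma prod_Icc_pow_ite_eq (hz0 : z 0 = 1) {a M : ℕ} (ha : a ≤ M) :
    ∏ j ∈ Icc 1 M, z j ^ (if j = a then 1 else 0) = z a := by
  simp only [pow_ite, pow_one, pow_zero, prod_ite_eq', mem_Icc]
  split_ifs with h
  · rfl
  · rw [show a = 0 by omega, hz0]

lemma prod_pow_upBlocksOf_eq_runWeight (hz0 : z 0 = 1) {n a M : ℕ} (ω : Fin n → Bool)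
    (s : ℕ → ℤ) (haM : a + n ≤ M) (hs : ∀ p < a, s p = 1)
    (hω : ∀ p, s (a + p) = stepB n ω p) :
    ∏ j ∈ Icc 1 M, z j ^ upBlocksOf s (a + n) j = runWeight z n a ω := by
  induction n generalizing a M s with
  | zero =>
    have ha : s a ≠ 1 := by
      rw [← add_zero a, hω 0]
      simp [stepB]
    have hblocks : ∀ j ∈ Icc 1 M, upBlocksOf s (a + 0) j = if j = a then 1 else 0 := by
      intro j hj
      have hsplit := upBlocksOf_add (j := j) hs ha 0
      rw [add_zero] at hsplit
      rw [add_zero, ← upBlocksOf_succ_of_ne_one ha (mem_Icc.mp hj).1, hsplit]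
      simp [upBlocksOf]
    rw [prod_congr rfl fun j hj => by rw [hblocks j hj], prod_Icc_pow_ite_eq hz0 (by omega)]
    rfl
  | succ n ih =>
    cases ω using Fin.consCases with
    | cons b ω =>
      have hω' (p : ℕ) : s (a + 1 + p) = stepB n ω p := by
        rw [add_assoc, add_comm 1, hω, stepB_cons_succ]
      cases b with
      | true =>
        have hs' : ∀ p < a + 1, s p = 1 := by
          intro p hp
          rcases Nat.lt_succ_iff_lt_or_eq.mp hp with hp | rfl
          · exact hs p hp
          · simpa [stepB_cons_zero, stepSign] using hω 0
        rw [runWeight_cons_true, ← ih (a := a + 1) (M := M) ω s (by omega) hs' hω',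
          show a + (n + 1) = a + 1 + n by omega]
      | false =>
        have ha : s a ≠ 1 := by
          rw [← add_zero a, hω 0]
          simp [stepB_cons_zero, stepSign]
        have hrest := ih (a := 0) (M := M) ω (fun p => s (a + 1 + p)) (by omega) (by simp)
          (by simpa using hω')
        rw [zero_add] at hrest
        rw [show a + (n + 1) = a + 1 + n by omega, runWeight_cons_false, ← hrest]
        simp only [upBlocksOf_add hs ha, pow_add, prod_mul_distrib,
          prod_Icc_pow_ite_eq hz0 (show a ≤ M by omega)]

end Weights

lemma prod_pow_upBlocks_eq_runWeight {z : ℕ → ℝ} (hz0 : z 0 = 1) {n : ℕ}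
    (ω : Fin n → Bool) :
    ∏ j ∈ Icc 1 n, z j ^ upBlocks n ω j = runWeight z n 0 ω := by
  have hblocks := prod_pow_upBlocksOf_eq_runWeight (a := 0) (M := n) hz0 ω (stepB n ω)
    (by omega) (by simp) (by simp)
  rwa [zero_add] at hblocks

section Sums

variable (z : ℕ → ℝ)

def walkWeightSum (n a : ℕ) : ℝ := ∑ ω : Fin n → Bool, runWeight z n a ω

def admissibleWeightSum (n a : ℕ) (h : ℤ) : ℝ :=
  ∑ ω ∈ univ.filter (fun ω : Fin n → Bool => ∀ i ≤ n, 0 ≤ hgtB n ω h i),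
    ((hgtB n ω h n : ℝ) + 1) * runWeight z n a ω

variable {z}

lemma walkWeightSum_succ (n a : ℕ) :
    walkWeightSum z (n + 1) a = walkWeightSum z n (a + 1) + z a * walkWeightSum z n 0 := by
  simp [walkWeightSum, Fintype.sum_pi_fin_succ, mul_sum]

lemma admissibleWeightSum_of_neg {h : ℤ} (hh : h < 0) (n a : ℕ) :
    admissibleWeightSum z n a h = 0 := by
  refine sum_eq_zero fun ω hω => absurd ((mem_filter.mp hω).2 0 (Nat.zero_le n)) ?_
  simpa [hgtB] using hh

lemma admissibleWeightSum_succ {h : ℤ} (hh : 0 ≤ h) (n a : ℕ) :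
    admissibleWeightSum z (n + 1) a h =
      admissibleWeightSum z n (a + 1) (h + 1) + z a * admissibleWeightSum z n 0 (h - 1) := by
  simp [admissibleWeightSum, sum_filter, Fintype.sum_pi_fin_succ, admissible_cons_iff, hh,
    hgtB_cons_succ, stepSign, mul_sum, ← sub_eq_add_neg, mul_left_comm]

lemma runWeight_nonneg (hz : ∀ a, 0 ≤ z a) :
    ∀ (n a : ℕ) (ω : Fin n → Bool), 0 ≤ runWeight z n a ω
  | 0, a, _ => hz a
  | n + 1, a, ω => by
    cases ω using Fin.consCases with
    | cons b ω =>
      cases b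
      · simpa using mul_nonneg (hz a) (runWeight_nonneg hz n 0 ω)
      · simpa using runWeight_nonneg hz n (a + 1) ω

lemma runWeight_le (hz : ∀ a, 0 ≤ z a) (hsub : ∀ a b : ℕ, z (a + b + 1) ≤ z a * z b) :
    ∀ (n a b : ℕ) (ω : Fin n → Bool),
      runWeight z n (a + b + 1) ω ≤ z a * runWeight z n b ω
  | 0, a, b, _ => hsub a b
  | n + 1, a, b, ω => by
    cases ω using Fin.consCases with
    | cons c ω =>
      cases c
      · simpa [mul_assoc] using
          mul_le_mul_of_nonneg_right (hsub a b) (runWeight_nonneg hz n 0 ω)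
      · simpa [add_assoc] using runWeight_le hz hsub n a (b + 1) ω

lemma walkWeightSum_succ_le (hz : ∀ a, 0 ≤ z a)
    (hsub : ∀ a b : ℕ, z (a + b + 1) ≤ z a * z b) (n a : ℕ) :
    walkWeightSum z n (a + 1) ≤ z a * walkWeightSum z n 0 := by
  rw [walkWeightSum, walkWeightSum, mul_sum]
  exact sum_le_sum fun ω _ => runWeight_le hz hsub n a 0 ω

lemma admissibleWeightSum_le (hz : ∀ a, 0 ≤ z a)
    (hsub : ∀ a b : ℕ, z (a + b + 1) ≤ z a * z b) (n a : ℕ) {h : ℤ} (hh : 0 ≤ h) :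
    admissibleWeightSum z n a h ≤ (h + 1) * walkWeightSum z n a := by
  induction n generalizing a h with
  | zero =>
    simp [admissibleWeightSum, walkWeightSum, hh, hgtB, runWeight]
  | succ n ih =>
    have hup := ih (a + 1) (h := h + 1) (by omega)
    have hdown : admissibleWeightSum z n 0 (h - 1) ≤ h * walkWeightSum z n 0 := by
      rcases hh.eq_or_lt with rfl | hpos
      · simp [admissibleWeightSum_of_neg]
      · simpa using ih 0 (h := h - 1) (by omega)
    have hrun := walkWeightSum_succ_le hz hsub n a
    calc admissibleWeightSum z (n + 1) a h
        ≤ (h + 2) * walkWeightSum z n (a + 1) + z a * (h * walkWeightSum z n 0) := by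
          rw [admissibleWeightSum_succ hh]
          push_cast at hup
          linarith [mul_le_mul_of_nonneg_left hdown (hz a)]
      _ ≤ (h + 1) * walkWeightSum z (n + 1) a := by
          rw [walkWeightSum_succ]
          linarith

end Sums

theorem bot_law_dominated_by_srw_general (z : ℕ → ℝ) (hz0 : z 0 = 1)
    (hz : ∀ j, 1 ≤ j → 0 < z j ∧ z j ≤ 1)
    (hsub : ∀ a b : ℕ, z (a + b + 1) ≤ z a * z b)
    (n : ℕ) (h : ℤ) (hh : 0 ≤ h) :
    ∑ ω ∈ Finset.univ.filter (fun ω : Fin n → Bool => ∀ i ≤ n, 0 ≤ hgtB n ω h i),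
        (((h : ℝ) + 1 + ((∑ j ∈ Finset.range n, stepB n ω j : ℤ) : ℝ)) / ((h : ℝ) + 1)) *
          ∏ j ∈ Finset.Icc 1 n, z j ^ upBlocks n ω j ≤
      ∑ ω : Fin n → Bool, ∏ j ∈ Finset.Icc 1 n, z j ^ upBlocks n ω j := by
  have hz_nonneg : ∀ a, 0 ≤ z a
    | 0 => hz0 ▸ zero_le_one
    | a + 1 => (hz (a + 1) (Nat.le_add_left 1 a)).1.le
  have hpos : (0 : ℝ) < h + 1 := by positivity
  calc _ = admissibleWeightSum z n 0 h / (h + 1) := by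
        rw [admissibleWeightSum, sum_div]
        refine sum_congr rfl fun ω _ => ?_
        rw [prod_pow_upBlocks_eq_runWeight hz0, hgtB]
        push_cast
        ring
    _ ≤ walkWeightSum z n 0 := by
        rw [div_le_iff₀ hpos, mul_comm]
        exact_mod_cast admissibleWeightSum_le hz_nonneg hsub n 0 hh
    _ = _ := by simp only [walkWeightSum, prod_pow_upBlocks_eq_runWeight hz0]

/-- Comparison of the nonnegative-walk (``bot``) law with the simple random walk:
the weighted sum over admissible paths is dominated by the unweighted simple
random walk sum. -/
theorem bot_law_dominated_by_srw (z : ℕ → ℝ) (hz0 : z 0 = 1)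
    (hz : ∀ j, 1 ≤ j → 0 < z j ∧ z j ≤ 1)
    (hsub : ∀ a b : ℕ, z (a + b + 1) ≤ z a * z b)
    (n : ℕ) (hn : 1 ≤ n) (h : ℤ) (hh : 0 ≤ h) :
    ∑ ω ∈ Finset.univ.filter (fun ω : Fin n → Bool => ∀ i ≤ n, 0 ≤ hgtB n ω h i),
        (((h : ℝ) + 1 + ((∑ j ∈ Finset.range n, stepB n ω j : ℤ) : ℝ)) / ((h : ℝ) + 1)) *
          ∏ j ∈ Finset.Icc 1 n, z j ^ upBlocks n ω j ≤
      ∑ ω : Fin n → Bool, ∏ j ∈ Finset.Icc 1 n, z j ^ upBlocks n ω j :=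
  bot_law_dominated_by_srw_general z hz0 hz hsub n h hh
end
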